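/- Let G be a graph on n vertices that admits a quantum k-coloring in normal form, i.e., a family of d×d projectors {P_α^v}_{v∈V(G), α∈[k]} with ∑_α P_α^v = I for each vertex v, and Tr(P_α^v P_α^w) = 0 for every edge (v,w) and every α. Then the Cartesian product G □ K_k admits an assignment of projectors Q_{(v,α)} = P_α^v to its vertices such that Tr(Q_x Q_y) = 0 for every edge (x,y) of G □ K_k, and such that the cliques {v}×[k] each carry projectors summing to the identity. -/
import Mathlib

/-- An orthogonal projector: a Hermitian matrix `P` with `P² = P`. -/
def IsProjector {d : ℕ} (P : Matrix (Fin d) (Fin d) ℂ) : Prop :=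
  P.IsHermitian ∧ P * P = P

open Matrix in
lemma trace_conjTranspose_mul (d : ℕ) (A : Matrix (Fin d) (Fin d) ℂ) :
    (Aᴴ * A).trace = ((∑ i, ∑ j, Complex.normSq (A j i) : ℝ) : ℂ) := by
  simp only [Matrix.trace, Matrix.diag, Matrix.mul_apply, Matrix.conjTranspose_apply]
  push_cast
  refine Finset.sum_congr rfl fun i _ => Finset.sum_congr rfl fun j _ => ?_
  rw [RCLike.star_def, mul_comm, Complex.mul_conj]

open Matrix in
lemma ortho_of_resolution {d k : ℕ} (P : Fin k → Matrix (Fin d) (Fin d) ℂ)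
    (hproj : ∀ α, IsProjector (P α)) (hsum : ∑ α, P α = 1) :
    ∀ α β, α ≠ β → (P α * P β).trace = 0 := by
  intro α β hne
  -- key: Tr(Pα Pβ) = Tr((PαPβ)ᴴ (PαPβ))
  have key : ∀ γ, (P α * P γ).trace = (((P α * P γ)ᴴ * (P α * P γ)).trace) := by
    intro γ
    rw [Matrix.conjTranspose_mul, (hproj α).1.eq, (hproj γ).1.eq]
    rw [show P γ * P α * (P α * P γ) = P γ * (P α * P α) * P γ by noncomm_ring,
      (hproj α).2, Matrix.trace_mul_cycle]
    rw [(hproj γ).2, Matrix.trace_mul_comm]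
  have hsum0 : ∑ γ ∈ Finset.univ.erase α, (P α * P γ).trace = 0 := by
    have h1 : ∑ γ, (P α * P γ).trace = (P α).trace := by
      rw [← Matrix.trace_sum, ← Finset.mul_sum, hsum, mul_one]
    have h2 : (P α * P α).trace = (P α).trace := by rw [(hproj α).2]
    have := Finset.add_sum_erase Finset.univ (fun γ => (P α * P γ).trace)
      (Finset.mem_univ α)
    rw [h1] at this
    linear_combination this - h2
  -- rewrite each term via key as nonneg real
  have hsum0' : ∑ γ ∈ Finset.univ.erase α,
      (∑ i, ∑ j, Complex.normSq ((P α * P γ) j i) : ℝ) = 0 := by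
    have : ((∑ γ ∈ Finset.univ.erase α,
        (∑ i, ∑ j, Complex.normSq ((P α * P γ) j i) : ℝ) : ℝ) : ℂ) = 0 := by
      push_cast
      rw [← hsum0]
      refine Finset.sum_congr rfl fun γ _ => ?_
      rw [key γ, trace_conjTranspose_mul]
      push_cast
      rfl
    exact_mod_cast this
  have hterm : (∑ i, ∑ j, Complex.normSq ((P α * P β) j i) : ℝ) = 0 := by
    have hnn : ∀ γ ∈ Finset.univ.erase α,
        0 ≤ (∑ i, ∑ j, Complex.normSq ((P α * P γ) j i) : ℝ) := by
      intro γ _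
      exact Finset.sum_nonneg fun i _ => Finset.sum_nonneg fun j _ => Complex.normSq_nonneg _
    exact (Finset.sum_eq_zero_iff_of_nonneg hnn).mp hsum0' β
      (Finset.mem_erase.mpr ⟨hne.symm, Finset.mem_univ β⟩)
  rw [key β, trace_conjTranspose_mul, hterm]
  norm_num

/-- Given a quantum `k`-coloring of `G` in normal form, the assignment
`Q_{(v,α)} = P_α^v` to the vertices of `G □ K_k` is trace-orthogonal along all
edges of `G □ K_k`, and on each clique `{v} × [k]` the projectors sum to the
identity. -/
theorem stmt_15 {V : Type*} (G : SimpleGraph V) {d k : ℕ}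
    (P : V → Fin k → Matrix (Fin d) (Fin d) ℂ)
    (hproj : ∀ v α, IsProjector (P v α))
    (hsum : ∀ v, ∑ α, P v α = 1)
    (hedge : ∀ v w, G.Adj v w → ∀ α, (P v α * P w α).trace = 0) :
    (∀ x y : V × Fin k, (G.boxProd (⊤ : SimpleGraph (Fin k))).Adj x y →
        (P x.1 x.2 * P y.1 y.2).trace = 0)
    ∧ ∀ v : V, ∑ α, P v α = 1 := by
  refine ⟨fun x y hxy => ?_, hsum⟩
  rcases SimpleGraph.boxProd_adj.mp hxy with ⟨hadj, heq⟩ | ⟨hadj, heq⟩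
  · rw [← heq]; exact hedge x.1 y.1 hadj x.2
  · rw [← heq]
    exact ortho_of_resolution (P x.1) (hproj x.1) (hsum x.1) x.2 y.2 hadj.ne
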